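/- Let p be a prime, α a positive integer, and G the elementary abelian group (Z/pZ)^α. Let k < p be a positive integer, a_1,...,a_k distinct elements of G, and b_1,...,b_k arbitrary elements of G. Then some permutation π ∈ S_k makes a_1·b_{π(1)}, ..., a_k·b_{π(k)} pairwise distinct. -/

import Mathlib

/-!
Identify `(ℤ/pℤ)^α` additively with the field `𝔽_{p^α}`. Expanding each Vandermonde determinant
by the Leibniz formula and reindexing the permutations gives
`∑_π det V(a + b ∘ π) = k! · det V(a)`, because for a fixed assignment of the `b`'s to columns the
matrix `((a_i + c_j)^j)` differs from `V(a)` by a unitriangular change of basis. As `k < p`, the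
right-hand side is nonzero when the `a_i` are distinct, so some `det V(a + b ∘ π)` is nonzero,
i.e. the sums `a_i + b_{π i}` are distinct.
-/

open Finset Matrix Polynomial Nat Function

section Vandermonde

variable {R : Type*} [CommRing R] {k : ℕ}

theorem det_add_pow_eq_det_vandermonde (a c : Fin k → R) :
    (of fun i j : Fin k => (a i + c j) ^ (j : ℕ)).det = (vandermonde a).det := by
  nontriviality R
  rw [det_eval_matrixOfPolynomials_eq_det_vandermonde a (fun j => (X + C (c j)) ^ (j : ℕ))
    (fun j => by rw [(monic_X_add_C _).natDegree_pow, natDegree_X_add_C, mul_one])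
    (fun j => (monic_X_add_C _).pow _)]
  simp

theorem sum_det_vandermonde_add_perm (a b : Fin k → R) :
    ∑ π : Equiv.Perm (Fin k), (vandermonde fun i => a i + b (π i)).det
      = k ! * (vandermonde a).det := by
  calc ∑ π : Equiv.Perm (Fin k), (vandermonde fun i => a i + b (π i)).det
      = ∑ σ : Equiv.Perm (Fin k), ∑ π : Equiv.Perm (Fin k),
          Equiv.Perm.sign σ • ∏ j, (a (σ j) + b ((π * σ) j)) ^ (j : ℕ) := by
        simp only [det_apply, vandermonde_apply, Equiv.Perm.coe_mul, Function.comp_apply]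
        exact sum_comm
    _ = ∑ τ : Equiv.Perm (Fin k), ∑ σ : Equiv.Perm (Fin k),
          Equiv.Perm.sign σ • ∏ j, (a (σ j) + b (τ j)) ^ (j : ℕ) :=
        (sum_congr rfl fun σ _ => Equiv.sum_comp (Equiv.mulRight σ)
          fun τ => Equiv.Perm.sign σ • ∏ j, (a (σ j) + b (τ j)) ^ (j : ℕ)).trans sum_comm
    _ = ∑ τ : Equiv.Perm (Fin k), (of fun i j : Fin k => (a i + b (τ j)) ^ (j : ℕ)).det := by
        simp only [det_apply, of_apply]
    _ = ∑ _τ : Equiv.Perm (Fin k), (vandermonde a).det :=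
        Fintype.sum_congr _ _ fun τ => det_add_pow_eq_det_vandermonde a (b ∘ τ)
    _ = k ! * (vandermonde a).det := by
        rw [sum_const, Finset.card_univ, Fintype.card_perm, Fintype.card_fin, nsmul_eq_mul]

theorem exists_perm_injective_add [IsDomain R] (hk : (k ! : R) ≠ 0) {a : Fin k → R}
    (ha : Injective a) (b : Fin k → R) :
    ∃ π : Equiv.Perm (Fin k), Injective fun i => a i + b (π i) := by
  have hsum : ∑ π : Equiv.Perm (Fin k), (vandermonde fun i => a i + b (π i)).det ≠ 0 := by
    rw [sum_det_vandermonde_add_perm]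
    exact mul_ne_zero hk (det_vandermonde_ne_zero_iff.mpr ha)
  obtain ⟨π, -, hπ⟩ := exists_ne_zero_of_sum_ne_zero hsum
  exact ⟨π, det_vandermonde_ne_zero_iff.mp hπ⟩

end Vandermonde

theorem dkss_elementary_abelian_general {p α : ℕ} (hp : p.Prime) (hα : 0 < α)
    {k : ℕ} (hkp : k < p)
    (a b : Fin k → Multiplicative (Fin α → ZMod p)) (ha : Function.Injective a) :
    ∃ π : Equiv.Perm (Fin k), Function.Injective (fun i => a i * b (π i)) := by
  have := Fact.mk hp
  let e : (Fin α → ZMod p) ≃ₗ[ZMod p] GaloisField p α := LinearEquiv.ofFinrankEq _ _ <| by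
    rw [Module.finrank_fin_fun, GaloisField.finrank p hα.ne']
  have hk : (k ! : GaloisField p α) ≠ 0 :=
    ((IsUnit.natCast_factorial_iff_of_charP p).mpr hkp).ne_zero
  obtain ⟨π, hπ⟩ := exists_perm_injective_add hk
    (e.injective.comp (Multiplicative.toAdd.injective.comp ha)) (e ∘ Multiplicative.toAdd ∘ b)
  refine ⟨π, Injective.of_comp (f := e ∘ Multiplicative.toAdd) ?_⟩
  simpa [comp_def] using hπ

/-- DKSS theorem, elementary abelian case: in `(ℤ/pℤ)^α`, given `k < p` distinct
elements `a i` and arbitrary `b i`, some permutation makes the products distinct. -/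
theorem dkss_elementary_abelian {p α : ℕ} (hp : p.Prime) (hα : 0 < α)
    {k : ℕ} (hk : 0 < k) (hkp : k < p)
    (a b : Fin k → Multiplicative (Fin α → ZMod p)) (ha : Function.Injective a) :
    ∃ π : Equiv.Perm (Fin k), Function.Injective (fun i => a i * b (π i)) :=
  dkss_elementary_abelian_general hp hα hkp a b ha
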